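/- Every finite set of points in the plane in general position that contains six points in convex position (a convex hexagon, not necessarily empty) contains an empty convex pentagon (5-hole). -/

import Mathlib

/-- A finite set of points in the plane is in general position if no three
distinct points of it are collinear. -/
def GenPos (S : Finset (ℝ × ℝ)) : Prop :=
  ∀ p ∈ S, ∀ q ∈ S, ∀ r ∈ S, p ≠ q → p ≠ r → q ≠ r →
    ¬ Collinear ℝ ({p, q, r} : Set (ℝ × ℝ))

/-- A finite set of points is in convex position if every point of it is an
extreme point of its convex hull. -/
def ConvexPos (H : Finset (ℝ × ℝ)) : Prop :=
  ∀ p ∈ H, p ∈ Set.extremePoints ℝ (convexHull ℝ (H : Set (ℝ × ℝ)))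

/-- `IsHole S H k` : `H` is a `k`-hole (empty convex `k`-gon) of `S`. -/
def IsHole (S H : Finset (ℝ × ℝ)) (k : ℕ) : Prop :=
  H ⊆ S ∧ H.card = k ∧ ConvexPos H ∧
    ∀ p ∈ S, p ∉ H → p ∉ convexHull ℝ (H : Set (ℝ × ℝ))

/-- The vertices of the convex hull of `S`, i.e. the extreme points of `S`. -/
def ExtremePts (S : Finset (ℝ × ℝ)) : Set (ℝ × ℝ) :=
  Set.extremePoints ℝ (convexHull ℝ (S : Set (ℝ × ℝ)))


/-!
Among the convex hexagons of `S`, choose `W` with the fewest points of `S` inside it that are not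
vertices. If there are none, dropping a vertex of `W` leaves a 5-hole. If there is exactly one,
`p`, the line through `p` and a vertex `w` has three of the other five vertices strictly on one
side, and these together with `p` and `w` form a 5-hole. If there are at least two, let `uv` be an
edge of their convex hull, so that the others lie to its left. If three vertices of `W` lie to its
right, they form a 5-hole with `u` and `v`; otherwise `v`, `u` and four vertices to its left form
a convex hexagon with fewer points inside, contradicting the choice of `W`.
-/

section Extreme

variable {𝕜 E : Type*} [Field 𝕜] [LinearOrder 𝕜] [IsStrictOrderedRing 𝕜] [AddCommGroup E]
  [Module 𝕜 E]

theorem notMem_convexHull_of_mem_extremePoints {A B : Set E} {x : E} (hB : Convex 𝕜 B)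
    (hx : x ∈ B.extremePoints 𝕜) (hAB : A ⊆ B) (hxA : x ∉ A) : x ∉ convexHull 𝕜 A := fun h =>
  hxA <| extremePoints_convexHull_subset <|
    inter_extremePoints_subset_extremePoints_of_subset (convexHull_min hAB hB) ⟨h, hx⟩

theorem mem_extremePoints_convexHull_insert {x : E} {t : Set E} (hx : x ∉ convexHull 𝕜 t) :
    x ∈ (convexHull 𝕜 (insert x t)).extremePoints 𝕜 := by
  -- If `x` is inside a segment `[y, z]` with `y ∈ [x, c]`, `z ∈ [x, d]` and `c, d ∈ hull t`, then
  -- `x` is a convex combination of `c` and `d` unless `y = z = x`.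
  rcases t.eq_empty_or_nonempty with rfl | ht
  · simp
  refine ⟨subset_convexHull 𝕜 _ (Set.mem_insert x t), ?_⟩
  rw [convexHull_insert ht]
  rintro y hy z hz ⟨α, β, hα, hβ, hαβ, hxyz⟩
  obtain ⟨_, hx₁, c, hc, a', a, ha', ha, haa, rfl⟩ := mem_convexJoin.1 hy
  obtain ⟨_, hx₂, d, hd, b', b, hb', hb, hbb, rfl⟩ := mem_convexJoin.1 hz
  obtain rfl := (Set.mem_singleton_iff.1 hx₁).symm
  obtain rfl := (Set.mem_singleton_iff.1 hx₂).symm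
  obtain rfl := eq_sub_of_add_eq haa
  obtain rfl := eq_sub_of_add_eq hbb
  obtain rfl := eq_sub_of_add_eq hαβ
  have hk : ((1 - β) * a + β * b) • x = ((1 - β) * a) • c + (β * b) • d := by
    linear_combination (norm := module) -hxyz
  set k := (1 - β) * a + β * b
  rcases (by positivity : 0 ≤ k).eq_or_lt with hk0 | hkpos
  · obtain rfl : a = 0 := by nlinarith
    obtain rfl : b = 0 := by nlinarith
    simp
  · refine absurd ?_ hx
    have hxcd : x = ((1 - β) * a / k) • c + (β * b / k) • d :=
      calc x = k⁻¹ • (k • x) := (inv_smul_smul₀ hkpos.ne' x).symm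
        _ = _ := by rw [hk]; module
    rw [hxcd]
    exact convex_convexHull 𝕜 t hc hd (by positivity) (by positivity)
      (by rw [← add_div, div_self hkpos.ne'])

end Extreme

/-- Twice the signed area of the triangle `u v w`: positive iff `w` lies to the left of the line
directed from `u` to `v`. -/
def cross (u v w : ℝ × ℝ) : ℝ :=
  (v.1 - u.1) * (w.2 - u.2) - (v.2 - u.2) * (w.1 - u.1)

@[simp]
theorem cross_self_left (u v : ℝ × ℝ) : cross u v u = 0 := by
  simp [cross]

@[simp]
theorem cross_self_right (u v : ℝ × ℝ) : cross u v v = 0 := by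
  simp only [cross]; ring

theorem cross_swap (u v w : ℝ × ℝ) : cross v u w = -cross u v w := by
  simp only [cross]; ring

theorem cross_smul_add_smul (u v x y : ℝ × ℝ) {a b : ℝ} (hab : a + b = 1) :
    cross u v (a • x + b • y) = a * cross u v x + b * cross u v y := by
  obtain rfl := eq_sub_of_add_eq hab
  simp only [cross, Prod.fst_add, Prod.snd_add, Prod.smul_fst, Prod.smul_snd, smul_eq_mul]
  ring

theorem convexOn_cross (u v : ℝ × ℝ) : ConvexOn ℝ Set.univ (cross u v) :=
  ⟨convex_univ, fun x _ y _ _ _ _ _ hab => (cross_smul_add_smul u v x y hab).le⟩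

theorem collinear_of_cross_eq_zero {p q r : ℝ × ℝ} (hpq : p ≠ q) (h : cross p q r = 0) :
    Collinear ℝ ({p, q, r} : Set (ℝ × ℝ)) := by
  rw [Set.pair_comm q r, Set.insert_comm p r]
  apply collinear_insert_of_mem_affineSpan_pair
  suffices ∃ t : ℝ, r.1 - p.1 = t * (q.1 - p.1) ∧ r.2 - p.2 = t * (q.2 - p.2) by
    obtain ⟨t, h₁, h₂⟩ := this
    rw [show r = AffineMap.lineMap p q t by
      ext <;> simp [AffineMap.lineMap_apply] <;> linarith]
    exact AffineMap.lineMap_mem_affineSpan_pair t p q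
  simp only [cross] at h
  by_cases h1 : q.1 = p.1
  · have h2 : q.2 - p.2 ≠ 0 := fun h2 => hpq (Prod.ext h1.symm (by linarith))
    refine ⟨(r.2 - p.2) / (q.2 - p.2), ?_, by field_simp⟩
    rw [h1, sub_self] at h ⊢
    simpa [h2, sub_eq_zero] using h
  · have h2 : q.1 - p.1 ≠ 0 := sub_ne_zero.2 h1
    refine ⟨(r.1 - p.1) / (q.1 - p.1), by field_simp, ?_⟩
    field_simp
    linarith

theorem GenPos.mono {S T : Finset (ℝ × ℝ)} (hS : GenPos S) (hTS : T ⊆ S) : GenPos T :=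
  fun p hp q hq r hr => hS p (hTS hp) q (hTS hq) r (hTS hr)

theorem GenPos.cross_ne_zero {S : Finset (ℝ × ℝ)} (hS : GenPos S) {p q r : ℝ × ℝ} (hp : p ∈ S)
    (hq : q ∈ S) (hr : r ∈ S) (hpq : p ≠ q) (hpr : p ≠ r) (hqr : q ≠ r) : cross p q r ≠ 0 :=
  fun h => hS p hp q hq r hr hpq hpr hqr (collinear_of_cross_eq_zero hpq h)

theorem ConvexPos.mono {H W : Finset (ℝ × ℝ)} (hW : ConvexPos W) (hHW : H ⊆ W) : ConvexPos H :=
  fun p hp => inter_extremePoints_subset_extremePoints_of_subset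
    (convexHull_mono (Finset.coe_subset.2 hHW)) ⟨subset_convexHull ℝ _ hp, hW p (hHW hp)⟩

theorem convexPos_of_forall_notMem_convexHull_sdiff {H : Finset (ℝ × ℝ)}
    (h : ∀ p ∈ H, p ∉ convexHull ℝ ((H : Set (ℝ × ℝ)) \ {p})) : ConvexPos H := fun p hp => by
  simpa [Set.insert_eq_of_mem (Finset.mem_coe.2 hp)] using
    mem_extremePoints_convexHull_insert (h p hp)

noncomputable def rightOf (u v : ℝ × ℝ) (X : Finset (ℝ × ℝ)) : Finset (ℝ × ℝ) :=
  {w ∈ X | cross u v w < 0}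

theorem card_rightOf_add_card_rightOf_swap {u v : ℝ × ℝ} {X : Finset (ℝ × ℝ)}
    (hX : ∀ w ∈ X, cross u v w ≠ 0) : (rightOf u v X).card + (rightOf v u X).card = X.card := by
  rw [← Finset.card_filter_add_card_filter_not (s := X) (fun w => cross u v w < 0)]
  congr 2
  refine Finset.filter_congr fun w hw => ?_
  rw [cross_swap, neg_lt_zero, not_lt]
  exact ⟨le_of_lt, fun h => h.lt_of_ne' (hX w hw)⟩

theorem eq_of_mem_convexHull_insert_of_cross_eq_zero {u v w x : ℝ × ℝ} {B : Set (ℝ × ℝ)}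
    (hw : cross u v w = 0) (hB : ∀ b ∈ B, cross u v b < 0)
    (hx : x ∈ convexHull ℝ (insert w B)) (hx0 : cross u v x = 0) : x = w := by
  rcases B.eq_empty_or_nonempty with rfl | hBne
  · simpa using hx
  rw [convexHull_insert hBne] at hx
  obtain ⟨_, hw', c, hc, s, t, hs, ht, hst, rfl⟩ := mem_convexJoin.1 hx
  obtain rfl := (Set.mem_singleton_iff.1 hw').symm
  obtain ⟨b, hb, hcb⟩ := (convexOn_cross u v).exists_ge_of_mem_convexHull (Set.subset_univ _) hc
  have hc0 : cross u v c < 0 := hcb.trans_lt (hB b hb)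
  rw [cross_smul_add_smul u v _ _ hst, hw] at hx0
  obtain rfl : t = 0 := by nlinarith
  obtain rfl : s = 1 := by linarith
  simp

theorem coe_insert_insert_subset_convexHull {W B : Finset (ℝ × ℝ)} {u v : ℝ × ℝ}
    (hu : u ∈ convexHull ℝ (W : Set (ℝ × ℝ))) (hv : v ∈ convexHull ℝ (W : Set (ℝ × ℝ)))
    (hBW : B ⊆ W) :
    ((insert u (insert v B) : Finset (ℝ × ℝ)) : Set (ℝ × ℝ)) ⊆ convexHull ℝ (W : Set (ℝ × ℝ)) := by
  rw [Finset.coe_insert, Finset.coe_insert, Set.insert_subset_iff, Set.insert_subset_iff]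
  exact ⟨hu, hv, (Finset.coe_subset.2 hBW).trans (subset_convexHull ℝ _)⟩

theorem convexPos_insert_insert {W B : Finset (ℝ × ℝ)} {u v : ℝ × ℝ} (hW : ConvexPos W)
    (hu : u ∈ convexHull ℝ (W : Set (ℝ × ℝ))) (hv : v ∈ convexHull ℝ (W : Set (ℝ × ℝ)))
    (huv : u ≠ v) (hB : B ⊆ rightOf u v W) : ConvexPos (insert u (insert v B)) := by
  have hBW : B ⊆ W := hB.trans (Finset.filter_subset _ _)
  have hBneg : ∀ b ∈ (B : Set (ℝ × ℝ)), cross u v b < 0 := fun b hb =>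
    (Finset.mem_filter.1 (hB hb)).2
  have hsub := coe_insert_insert_subset_convexHull hu hv hBW
  refine convexPos_of_forall_notMem_convexHull_sdiff fun p hp hpP => ?_
  rw [Finset.coe_insert, Finset.coe_insert] at hsub hpP
  rcases Finset.mem_insert.1 hp with rfl | hp
  · have hpP' := convexHull_mono (Set.sdiff_singleton_subset_iff.2 subset_rfl) hpP
    exact huv (eq_of_mem_convexHull_insert_of_cross_eq_zero (cross_self_right p v) hBneg hpP'
      (cross_self_left p v))
  rcases Finset.mem_insert.1 hp with rfl | hp
  · have hpP' := convexHull_mono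
      (Set.sdiff_singleton_subset_iff.2 (Set.insert_comm u p (B : Set (ℝ × ℝ))).subset) hpP
    exact huv (eq_of_mem_convexHull_insert_of_cross_eq_zero (cross_self_left u p) hBneg hpP'
      (cross_self_right u p)).symm
  · exact notMem_convexHull_of_mem_extremePoints (convex_convexHull ℝ _) (hW p (hBW hp))
      (Set.sdiff_subset.trans hsub) (fun h => h.2 (Set.mem_singleton p)) hpP

open Classical in
noncomputable def interiorPts (S W : Finset (ℝ × ℝ)) : Finset (ℝ × ℝ) :=
  {p ∈ S | p ∈ convexHull ℝ (W : Set (ℝ × ℝ)) ∧ p ∉ W}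

theorem mem_interiorPts {S W : Finset (ℝ × ℝ)} {p : ℝ × ℝ} :
    p ∈ interiorPts S W ↔ p ∈ S ∧ p ∈ convexHull ℝ (W : Set (ℝ × ℝ)) ∧ p ∉ W := by
  simp only [interiorPts, Finset.mem_filter]

theorem interiorPts_subset {S W : Finset (ℝ × ℝ)} : interiorPts S W ⊆ S :=
  fun _ hp => (mem_interiorPts.1 hp).1

theorem isHole_iff {S H : Finset (ℝ × ℝ)} {k : ℕ} :
    IsHole S H k ↔ H ⊆ S ∧ H.card = k ∧ ConvexPos H ∧ interiorPts S H = ∅ := by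
  simp only [IsHole, Finset.eq_empty_iff_forall_notMem, mem_interiorPts]
  grind

theorem interiorPts_mono {S W H : Finset (ℝ × ℝ)} (hW : ConvexPos W)
    (hHW : (H : Set (ℝ × ℝ)) ⊆ convexHull ℝ (W : Set (ℝ × ℝ))) :
    interiorPts S H ⊆ interiorPts S W := by
  intro p hp
  rw [mem_interiorPts] at hp ⊢
  obtain ⟨hpS, hpH, hpnH⟩ := hp
  refine ⟨hpS, convexHull_min hHW (convex_convexHull ℝ _) hpH, fun hpW => ?_⟩
  exact notMem_convexHull_of_mem_extremePoints (convex_convexHull ℝ _) (hW p hpW) hHW hpnH hpH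

noncomputable def slopeFrom (u w : ℝ × ℝ) : WithTop ℝ :=
  if w.1 = u.1 then ⊤ else ((w.2 - u.2) / (w.1 - u.1) : ℝ)

theorem slopeFrom_lt_of_cross_neg {u v w : ℝ × ℝ} (hv : toLex u < toLex v)
    (hw : toLex u < toLex w) (h : cross u v w < 0) : slopeFrom u w < slopeFrom u v := by
  rw [Prod.Lex.toLex_lt_toLex] at hv hw
  simp only [cross] at h
  unfold slopeFrom
  rcases hv with hv | ⟨hv1, hv2⟩
  · rcases hw with hw | ⟨hw1, hw2⟩
    · rw [if_neg hw.ne', if_neg hv.ne', WithTop.coe_lt_coe,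
        div_lt_div_iff₀ (sub_pos.2 hw) (sub_pos.2 hv)]
      linarith
    · rw [← hw1] at h
      nlinarith
  · have hw1 : w.1 ≠ u.1 := fun hw1 => by rw [← hv1, hw1] at h; simp at h
    rw [if_neg hw1, if_pos hv1.symm]
    exact WithTop.coe_lt_top _

/-- Gift wrapping: `u` is the lexicographically least point and `v` the one of least slope as seen
from `u`. -/
theorem exists_cross_pos_of_two_le_card {T : Finset (ℝ × ℝ)} (hT : GenPos T)
    (h2 : 2 ≤ T.card) : ∃ u ∈ T, ∃ v ∈ T, u ≠ v ∧ ∀ w ∈ T, w ≠ u → w ≠ v → 0 < cross u v w := by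
  obtain ⟨u, hu, hmin⟩ := T.exists_min_image toLex (Finset.card_pos.1 (by omega))
  have hlt : ∀ w ∈ T, w ≠ u → toLex u < toLex w := fun w hw hwu =>
    (hmin w hw).lt_of_ne (toLex.injective.ne hwu.symm)
  obtain ⟨v, hv, hvmin⟩ := (T.erase u).exists_min_image (slopeFrom u)
    (by rw [← Finset.card_pos, Finset.card_erase_of_mem hu]; omega)
  obtain ⟨hvu, hvT⟩ := Finset.mem_erase.1 hv
  refine ⟨u, hu, v, hvT, hvu.symm, fun w hw hwu hwv => ?_⟩
  refine (hT.cross_ne_zero hu hvT hw hvu.symm hwu.symm hwv.symm).lt_or_gt.resolve_left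
    fun hneg => ?_
  exact (hvmin w (Finset.mem_erase.2 ⟨hwu, hw⟩)).not_gt
    (slopeFrom_lt_of_cross_neg (hlt v hvT hvu) (hlt w hw hwu) hneg)

theorem exists_isHole_of_three_le_card_rightOf {S W : Finset (ℝ × ℝ)} {u v : ℝ × ℝ}
    (hWS : W ⊆ S) (hW : ConvexPos W) (huS : u ∈ S) (hvS : v ∈ S)
    (hu : u ∈ convexHull ℝ (W : Set (ℝ × ℝ))) (hv : v ∈ convexHull ℝ (W : Set (ℝ × ℝ)))
    (huv : u ≠ v) (h3 : 3 ≤ (rightOf u v W).card)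
    (hleft : ∀ s ∈ interiorPts S W, s ≠ u → s ≠ v → 0 < cross u v s) :
    ∃ H : Finset (ℝ × ℝ), IsHole S H 5 := by
  obtain ⟨A, hA, hA3⟩ := Finset.exists_subset_card_eq h3
  have hAW : A ⊆ W := hA.trans (Finset.filter_subset _ _)
  have hAneg : ∀ a ∈ A, cross u v a < 0 := fun a ha => (Finset.mem_filter.1 (hA ha)).2
  have huA : u ∉ A := fun h => (hAneg u h).ne (cross_self_left u v)
  have hvA : v ∉ A := fun h => (hAneg v h).ne (cross_self_right u v)
  have hsub := coe_insert_insert_subset_convexHull hu hv hAW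
  refine ⟨insert u (insert v A), isHole_iff.2 ⟨?_, ?_, convexPos_insert_insert hW hu hv huv hA, ?_⟩⟩
  · exact Finset.insert_subset huS (Finset.insert_subset hvS (hAW.trans hWS))
  · rw [Finset.card_insert_of_notMem (by simp [huv, huA]), Finset.card_insert_of_notMem hvA, hA3]
  · refine Finset.eq_empty_of_forall_notMem fun s hs => ?_
    obtain ⟨-, hsP, hsnP⟩ := mem_interiorPts.1 hs
    have hs_pos := hleft s (interiorPts_mono hW hsub hs) (by rintro rfl; simp at hsnP)
      (by rintro rfl; simp at hsnP)
    obtain ⟨y, hy, hsy⟩ := (convexOn_cross u v).exists_ge_of_mem_convexHull (Set.subset_univ _) hsP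
    have hy0 : cross u v y ≤ 0 := by
      rcases Finset.mem_insert.1 hy with rfl | hy
      · exact (cross_self_left _ _).le
      rcases Finset.mem_insert.1 hy with rfl | hy
      · exact (cross_self_right _ _).le
      · exact (hAneg y hy).le
    linarith

theorem exists_isHole_of_interiorPts_eq_empty {S W : Finset (ℝ × ℝ)} (hWS : W ⊆ S)
    (hW6 : W.card = 6) (hW : ConvexPos W) (hT : interiorPts S W = ∅) :
    ∃ H : Finset (ℝ × ℝ), IsHole S H 5 := by
  obtain ⟨w, hw⟩ : W.Nonempty := Finset.card_pos.1 (by omega)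
  have hsub : ((W.erase w : Finset (ℝ × ℝ)) : Set (ℝ × ℝ)) ⊆ convexHull ℝ (W : Set (ℝ × ℝ)) :=
    (Finset.coe_subset.2 (Finset.erase_subset w W)).trans (subset_convexHull ℝ _)
  refine ⟨W.erase w, isHole_iff.2 ⟨(Finset.erase_subset w W).trans hWS, ?_,
    hW.mono (Finset.erase_subset w W), Finset.subset_empty.1 (hT ▸ interiorPts_mono hW hsub)⟩⟩
  rw [Finset.card_erase_of_mem hw, hW6]

theorem exists_isHole_of_interiorPts_eq_singleton {S W : Finset (ℝ × ℝ)} {p : ℝ × ℝ}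
    (hS : GenPos S) (hWS : W ⊆ S) (hW6 : W.card = 6) (hW : ConvexPos W)
    (hT : interiorPts S W = {p}) : ∃ H : Finset (ℝ × ℝ), IsHole S H 5 := by
  obtain ⟨hpS, hp, hpW⟩ := mem_interiorPts.1 (hT ▸ Finset.mem_singleton_self p)
  obtain ⟨w, hw⟩ : W.Nonempty := Finset.card_pos.1 (by omega)
  have hpw : p ≠ w := fun h => hpW (h ▸ hw)
  have hsplit := card_rightOf_add_card_rightOf_swap (u := p) (v := w) (X := W.erase w)
    fun x hx => hS.cross_ne_zero hpS (hWS hw) (hWS (Finset.mem_of_mem_erase hx)) hpw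
      (fun h => hpW (h ▸ Finset.mem_of_mem_erase hx)) (Finset.ne_of_mem_erase hx).symm
  rw [Finset.card_erase_of_mem hw, hW6] at hsplit
  have honly : ∀ s ∈ interiorPts S W, s ≠ p → False := fun s hs hsp =>
    hsp (Finset.mem_singleton.1 (hT ▸ hs))
  have hmono : ∀ u v, rightOf u v (W.erase w) ⊆ rightOf u v W := fun u v =>
    Finset.filter_subset_filter _ (Finset.erase_subset w W)
  rcases le_or_gt 3 (rightOf p w (W.erase w)).card with h3 | h3
  · exact exists_isHole_of_three_le_card_rightOf hWS hW hpS (hWS hw) hp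
      (subset_convexHull ℝ _ hw) hpw (h3.trans (Finset.card_le_card (hmono p w)))
      fun s hs hsp _ => (honly s hs hsp).elim
  · exact exists_isHole_of_three_le_card_rightOf hWS hW (hWS hw) hpS
      (subset_convexHull ℝ _ hw) hp hpw.symm
      ((by omega : 3 ≤ (rightOf w p (W.erase w)).card).trans (Finset.card_le_card (hmono w p)))
      fun s hs _ hsp => (honly s hs hsp).elim

theorem exists_isHole_of_two_le_card_interiorPts {S W : Finset (ℝ × ℝ)} (hS : GenPos S)
    (hWS : W ⊆ S) (hW6 : W.card = 6) (hW : ConvexPos W)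
    (hmin : ∀ W' : Finset (ℝ × ℝ), W' ⊆ S → W'.card = 6 → ConvexPos W' →
      (interiorPts S W).card ≤ (interiorPts S W').card)
    (hT : 2 ≤ (interiorPts S W).card) : ∃ H : Finset (ℝ × ℝ), IsHole S H 5 := by
  obtain ⟨u, huT, v, hvT, huv, hleft⟩ :=
    exists_cross_pos_of_two_le_card (hS.mono interiorPts_subset) hT
  obtain ⟨huS, hu, huW⟩ := mem_interiorPts.1 huT
  obtain ⟨hvS, hv, hvW⟩ := mem_interiorPts.1 hvT
  have hsplit := card_rightOf_add_card_rightOf_swap (u := u) (v := v) (X := W)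
    fun w hw => hS.cross_ne_zero huS hvS (hWS hw) huv (fun h => huW (h ▸ hw))
      (fun h => hvW (h ▸ hw))
  by_cases h3 : 3 ≤ (rightOf u v W).card
  · exact exists_isHole_of_three_le_card_rightOf hWS hW huS hvS hu hv huv h3 hleft
  obtain ⟨B, hB, hB4⟩ := Finset.exists_subset_card_eq (show 4 ≤ (rightOf v u W).card by omega)
  have hBW : B ⊆ W := hB.trans (Finset.filter_subset _ _)
  have hW'S : insert v (insert u B) ⊆ S :=
    Finset.insert_subset hvS (Finset.insert_subset huS (hBW.trans hWS))
  have hW'6 : (insert v (insert u B)).card = 6 := by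
    rw [Finset.card_insert_of_notMem (by simpa [huv.symm] using fun h => hvW (hBW h)),
      Finset.card_insert_of_notMem (fun h => huW (hBW h)), hB4]
  have hfewer : interiorPts S (insert v (insert u B)) ⊂ interiorPts S W :=
    Finset.ssubset_iff_of_subset (interiorPts_mono hW
      (coe_insert_insert_subset_convexHull hv hu hBW)) |>.2
      ⟨u, huT, fun h => (mem_interiorPts.1 h).2.2 (by simp)⟩
  exact ((Finset.card_lt_card hfewer).not_ge
    (hmin _ hW'S hW'6 (convexPos_insert_insert hW hv hu huv.symm hB))).elim

theorem exists_hexagon_min_interiorPts {S : Finset (ℝ × ℝ)}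
    (h : ∃ T : Finset (ℝ × ℝ), T ⊆ S ∧ T.card = 6 ∧ ConvexPos T) :
    ∃ W : Finset (ℝ × ℝ), W ⊆ S ∧ W.card = 6 ∧ ConvexPos W ∧
      ∀ W' : Finset (ℝ × ℝ), W' ⊆ S → W'.card = 6 → ConvexPos W' →
        (interiorPts S W).card ≤ (interiorPts S W').card := by
  classical
  obtain ⟨T, hTS, hT6, hT⟩ := h
  obtain ⟨W, hW, hmin⟩ := ((S.powersetCard 6).filter ConvexPos).exists_min_image
    (fun W => (interiorPts S W).card)
    ⟨T, Finset.mem_filter.2 ⟨Finset.mem_powersetCard.2 ⟨hTS, hT6⟩, hT⟩⟩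
  simp only [Finset.mem_filter, Finset.mem_powersetCard] at hW hmin
  exact ⟨W, hW.1.1, hW.1.2, hW.2, fun W' h1 h2 h3 => hmin W' ⟨⟨h1, h2⟩, h3⟩⟩

theorem six_convex_position_gives_5hole (S : Finset (ℝ × ℝ)) (hgp : GenPos S)
    (hhex : ∃ T : Finset (ℝ × ℝ), T ⊆ S ∧ T.card = 6 ∧ ConvexPos T) :
    ∃ H : Finset (ℝ × ℝ), IsHole S H 5 := by
  obtain ⟨W, hWS, hW6, hW, hmin⟩ := exists_hexagon_min_interiorPts hhex
  obtain hT | hT | hT : (interiorPts S W).card = 0 ∨ (interiorPts S W).card = 1 ∨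
      2 ≤ (interiorPts S W).card := by omega
  · exact exists_isHole_of_interiorPts_eq_empty hWS hW6 hW (Finset.card_eq_zero.1 hT)
  · obtain ⟨p, hp⟩ := Finset.card_eq_one.1 hT
    exact exists_isHole_of_interiorPts_eq_singleton hgp hWS hW6 hW hp
  · exact exists_isHole_of_two_le_card_interiorPts hgp hWS hW6 hW hmin hT
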